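/- Let d ≥ 3 and f ∈ C²([0,1]). Then the map s ↦ S_d[f](s) is differentiable on [0,1] with ‖(S_d f)'‖_∞ ≤ (c_{d+2}/d) ‖f'‖_∞. If additionally f'(0) = 0, then (S_d f)'(s) = (s/d) S_{d+2}[f''](s). -/

import Mathlib

/-
Extending `f` to a `C¹` function on `ℝ` (a primitive of `f'` extended by constants) lets us
differentiate `S d f` under the integral sign: `(S d f)' s = ∫₀¹ t f'(t s) ρ_d(t) dt`.
The recursion `Γ(x + 1) = x Γ(x)` gives `ρ_{d+2}' = -d t ρ_d`, so `∫₀¹ t ρ_d = c_{d+2} / d`,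
which is the bound; integrating by parts against `ρ_{d+2}`, which vanishes at `1`, gives the
formula when `f'(0) = 0`.
-/

open MeasureTheory Real Set

noncomputable def c (d : ℕ) : ℝ :=
  2 * Real.Gamma ((d : ℝ) / 2) / (Real.sqrt π * Real.Gamma (((d : ℝ) - 1) / 2))

noncomputable def rho (d : ℕ) (t : ℝ) : ℝ :=
  c d * (1 - t ^ 2) ^ (((d : ℝ) - 3) / 2)

noncomputable def S (d : ℕ) (f : ℝ → ℝ) (s : ℝ) : ℝ :=
  ∫ t in (0:ℝ)..1, f (t * s) * rho d t

theorem exists_hasDerivAt_eqOn_Icc {a b : ℝ} (hab : a ≤ b) {f f' : ℝ → ℝ}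
    (hf : ∀ x ∈ Icc a b, HasDerivWithinAt f (f' x) (Icc a b) x)
    (hf' : ContinuousOn f' (Icc a b)) :
    ∃ F F' : ℝ → ℝ, (∀ x, HasDerivAt F (F' x) x) ∧ Continuous F' ∧
      EqOn F f (Icc a b) ∧ EqOn F' f' (Icc a b) := by
  set F' := IccExtend hab ((Icc a b).domRestrict f')
  have hF'c : Continuous F' := continuous_IccExtend_iff.2 hf'.domRestrict
  have hF'f : EqOn F' f' (Icc a b) := fun x hx => IccExtend_of_mem hab _ hx
  have hF : ∀ x, HasDerivAt (fun x => f a + ∫ y in a..x, F' y) (F' x) x := fun x =>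
    (hF'c.integral_hasStrictDerivAt a x).hasDerivAt.const_add (f a)
  refine ⟨_, F', hF, hF'c, fun x hx => ?_, hF'f⟩
  refine eq_of_has_deriv_right_eq (fun y _ => (hF y).hasDerivWithinAt) (fun y hy => ?_)
    (fun y _ => (hF y).continuousAt.continuousWithinAt)
    (fun y hy => (hf y hy).continuousWithinAt) (by simp) x hx
  rw [hF'f (Ico_subset_Icc_self hy)]
  exact (hf y (Ico_subset_Icc_self hy)).mono_of_mem_nhdsWithin (Icc_mem_nhdsGE_of_mem hy)

theorem hasDerivAt_integral_comp_mul {F F' w : ℝ → ℝ} (hF : ∀ x, HasDerivAt F (F' x) x)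
    (hF' : Continuous F') (hw : IntervalIntegrable w volume 0 1) (s : ℝ) :
    HasDerivAt (fun s => ∫ t in (0:ℝ)..1, F (t * s) * w t)
      (∫ t in (0:ℝ)..1, t * F' (t * s) * w t) s := by
  have hFc : Continuous F := continuous_iff_continuousAt.2 fun x => (hF x).continuousAt
  obtain ⟨M, hM⟩ := (isCompact_closedBall (0:ℝ) (|s| + 1)).exists_bound_of_continuousOn
    hF'.continuousOn
  have hw_meas := hw.def'.aestronglyMeasurable
  refine (intervalIntegral.hasDerivAt_integral_of_dominated_loc_of_deriv_le
    (F := fun x t => F (t * x) * w t) (F' := fun x t => t * F' (t * x) * w t)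
    (bound := fun t => M * |w t|) (Metric.ball_mem_nhds s one_pos)
    (Filter.Eventually.of_forall fun x =>
      (hFc.comp (continuous_mul_const x)).aestronglyMeasurable.mul hw_meas)
    (hw.continuousOn_mul (hFc.comp (continuous_mul_const s)).continuousOn)
    ((continuous_id.mul (hF'.comp (continuous_mul_const s))).aestronglyMeasurable.mul hw_meas)
    (ae_of_all _ fun t ht x hx => ?_) (hw.abs.const_mul M)
    (ae_of_all _ fun t _ x _ => ?_)).2
  · rw [uIoc_of_le zero_le_one] at ht
    have hx' : |x| ≤ |s| + 1 := by
      rw [Metric.mem_ball, Real.dist_eq] at hx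
      linarith [abs_sub_abs_le_abs_sub x s]
    have htx : t * x ∈ Metric.closedBall (0:ℝ) (|s| + 1) := by
      rw [mem_closedBall_zero_iff, Real.norm_eq_abs, abs_mul, abs_of_pos ht.1]
      exact (mul_le_of_le_one_left (abs_nonneg x) ht.2).trans hx'
    rw [norm_mul, norm_mul, Real.norm_of_nonneg ht.1.le, Real.norm_eq_abs (w t)]
    calc t * ‖F' (t * x)‖ * |w t| ≤ 1 * M * |w t| := by
          gcongr
          exacts [ht.2, hM _ htx]
      _ = M * |w t| := by rw [one_mul]
  · exact (((hF (t * x)).comp x ((hasDerivAt_id x).const_mul t)).mul_const (w t)).congr_deriv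
      (by ring)

theorem hasDerivWithinAt_integral_comp_mul {f f' w : ℝ → ℝ}
    (hf : ∀ x ∈ Icc (0:ℝ) 1, HasDerivWithinAt f (f' x) (Icc 0 1) x)
    (hf' : ContinuousOn f' (Icc 0 1)) (hw : IntervalIntegrable w volume 0 1) {s : ℝ}
    (hs : s ∈ Icc (0:ℝ) 1) :
    HasDerivWithinAt (fun s => ∫ t in (0:ℝ)..1, f (t * s) * w t)
      (∫ t in (0:ℝ)..1, t * f' (t * s) * w t) (Icc 0 1) s := by
  obtain ⟨F, F', hF, hF'c, hFf, hF'f⟩ := exists_hasDerivAt_eqOn_Icc zero_le_one hf hf'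
  have hmem {x : ℝ} (hx : x ∈ Icc (0:ℝ) 1) {t : ℝ} (ht : t ∈ uIcc (0:ℝ) 1) :
      t * x ∈ Icc (0:ℝ) 1 := by
    rw [uIcc_of_le zero_le_one] at ht
    exact unitInterval.mul_mem ht hx
  have := (hasDerivAt_integral_comp_mul hF hF'c hw s).hasDerivWithinAt (s := Icc 0 1)
  rw [intervalIntegral.integral_congr fun t ht => by rw [hF'f (hmem hs ht)]] at this
  exact this.congr_of_mem (fun x hx => intervalIntegral.integral_congr fun t ht => by
    simp only [hFf (hmem hx ht)]) hs

theorem abs_integral_mul_comp_mul_le {f' w : ℝ → ℝ} {C s : ℝ}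
    (hw : ∀ t ∈ Ioc (0:ℝ) 1, 0 ≤ w t) (hw_int : IntervalIntegrable (fun t => t * w t) volume 0 1)
    (hC : ∀ x ∈ Icc (0:ℝ) 1, |f' x| ≤ C) (hs : s ∈ Icc (0:ℝ) 1) :
    |∫ t in (0:ℝ)..1, t * f' (t * s) * w t| ≤ C * ∫ t in (0:ℝ)..1, t * w t := by
  rw [← intervalIntegral.integral_const_mul, ← Real.norm_eq_abs]
  refine intervalIntegral.norm_integral_le_of_norm_le zero_le_one
    (ae_of_all _ fun t ht => ?_) (hw_int.const_mul C)
  rw [Real.norm_eq_abs, abs_mul, abs_mul, abs_of_pos ht.1, abs_of_nonneg (hw t ht)]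
  have := hC _ (unitInterval.mul_mem (Ioc_subset_Icc_self ht) hs)
  calc t * |f' (t * s)| * w t ≤ t * C * w t := by gcongr; exacts [hw t ht, ht.1.le]
    _ = C * (t * w t) := by ring

theorem c_pos {d : ℕ} (hd : 2 ≤ d) : 0 < c d := by
  have hd' : (2:ℝ) ≤ d := by exact_mod_cast hd
  have := Real.Gamma_pos_of_pos (by linarith : (0:ℝ) < d / 2)
  have := Real.Gamma_pos_of_pos (by linarith : (0:ℝ) < (d - 1) / 2)
  have := Real.sqrt_pos.2 Real.pi_pos
  unfold c
  positivity

theorem c_add_two {d : ℕ} (hd : 2 ≤ d) : ((d:ℝ) - 1) * c (d + 2) = d * c d := by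
  have hd' : (2:ℝ) ≤ d := by exact_mod_cast hd
  have hd1 : (0:ℝ) < d - 1 := by linarith
  have := Real.Gamma_pos_of_pos (by linarith : (0:ℝ) < (d - 1) / 2)
  have := Real.sqrt_pos.2 Real.pi_pos
  unfold c
  push_cast
  rw [show ((d:ℝ) + 2) / 2 = d / 2 + 1 by ring,
    show ((d:ℝ) + 2 - 1) / 2 = (d - 1) / 2 + 1 by ring,
    Real.Gamma_add_one (by positivity), Real.Gamma_add_one (by positivity)]
  field_simp

theorem rho_nonneg {d : ℕ} (hd : 2 ≤ d) {t : ℝ} (ht : |t| ≤ 1) : 0 ≤ rho d t :=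
  mul_nonneg (c_pos hd).le
    (Real.rpow_nonneg (sub_nonneg.2 (sq_le_one_iff_abs_le_one t |>.2 ht)) _)

theorem continuous_rho {d : ℕ} (hd : 3 ≤ d) : Continuous (rho d) := by
  have hd' : (3:ℝ) ≤ d := by exact_mod_cast hd
  exact continuous_const.mul
    ((continuous_const.sub (continuous_pow 2)).rpow_const fun _ => Or.inr (by linarith))

theorem rho_add_two_one {d : ℕ} (hd : 2 ≤ d) : rho (d + 2) 1 = 0 := by
  have hd' : (2:ℝ) ≤ d := by exact_mod_cast hd
  rw [rho, one_pow, sub_self, Real.zero_rpow (by push_cast; linarith), mul_zero]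

theorem hasDerivAt_rho_add_two {d : ℕ} (hd : 3 ≤ d) (t : ℝ) :
    HasDerivAt (rho (d + 2)) (-(d * (t * rho d t))) t := by
  have hd' : (3:ℝ) ≤ d := by exact_mod_cast hd
  have h := (((hasDerivAt_pow 2 t).const_sub 1).rpow_const
    (p := ((d:ℝ) - 1) / 2) (Or.inr (by linarith))).const_mul (c (d + 2))
  have hexp : ((d + 2 : ℕ) : ℝ) - 3 = (d:ℝ) - 1 := by push_cast; ring
  have hrho : rho (d + 2) = fun y => c (d + 2) * (1 - y ^ 2) ^ (((d:ℝ) - 1) / 2) := by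
    funext y; rw [rho, hexp]
  rw [hrho]
  refine h.congr_deriv ?_
  rw [show ((d:ℝ) - 1) / 2 - 1 = ((d:ℝ) - 3) / 2 by ring, rho, Nat.cast_ofNat, pow_one]
  linear_combination -t * (1 - t ^ 2) ^ (((d:ℝ) - 3) / 2) * c_add_two (d := d) (by omega)

theorem integral_mul_rho {d : ℕ} (hd : 3 ≤ d) :
    ∫ t in (0:ℝ)..1, t * rho d t = c (d + 2) / d := by
  have hd0 : (d:ℝ) ≠ 0 := by positivity
  have hrho := continuous_rho hd
  have h := intervalIntegral.integral_eq_sub_of_hasDerivAt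
    (fun t _ => hasDerivAt_rho_add_two hd t) (Continuous.intervalIntegrable (by fun_prop) 0 1)
  rw [intervalIntegral.integral_neg, intervalIntegral.integral_const_mul,
    rho_add_two_one (by omega), show rho (d + 2) 0 = c (d + 2) by simp [rho]] at h
  field_simp
  linarith

theorem integral_mul_comp_mul_rho {d : ℕ} (hd : 3 ≤ d) {f' f'' : ℝ → ℝ}
    (hf' : ∀ t ∈ Icc (0:ℝ) 1, HasDerivWithinAt f' (f'' t) (Icc (0:ℝ) 1) t)
    (hf'' : ContinuousOn f'' (Icc (0:ℝ) 1)) (h0 : f' 0 = 0) {s : ℝ} (hs : s ∈ Icc (0:ℝ) 1) :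
    ∫ t in (0:ℝ)..1, t * f' (t * s) * rho d t = s / d * S (d + 2) f'' s := by
  have hd0 : (d:ℝ) ≠ 0 := by positivity
  have hmaps : MapsTo (fun t => t * s) (Icc (0:ℝ) 1) (Icc 0 1) :=
    fun t ht => unitInterval.mul_mem ht hs
  have hrho := continuous_rho hd
  have hibp := intervalIntegral.integral_mul_deriv_eq_deriv_mul_of_hasDerivWithinAt
    (u := fun t => f' (t * s)) (u' := fun t => f'' (t * s) * s)
    (v := rho (d + 2)) (v' := fun t => -(d * (t * rho d t)))
    (fun t ht => by
      rw [uIcc_of_le zero_le_one] at ht ⊢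
      exact (hf' _ (hmaps ht)).comp t (hasDerivAt_mul_const s).hasDerivWithinAt hmaps)
    (fun t _ => (hasDerivAt_rho_add_two hd t).hasDerivWithinAt)
    (ContinuousOn.intervalIntegrable (by
      rw [uIcc_of_le zero_le_one]
      exact (hf''.comp (continuous_mul_const s).continuousOn hmaps).mul continuousOn_const))
    (Continuous.intervalIntegrable (by fun_prop) 0 1)
  simp only [rho_add_two_one (by omega : 2 ≤ d), zero_mul, h0, mul_zero, sub_zero, mul_neg,
    intervalIntegral.integral_neg] at hibp
  have hlhs : ∫ t in (0:ℝ)..1, f' (t * s) * (d * (t * rho d t))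
      = d * ∫ t in (0:ℝ)..1, t * f' (t * s) * rho d t := by
    rw [← intervalIntegral.integral_const_mul]; congr 1; ext t; ring
  have hrhs : ∫ t in (0:ℝ)..1, f'' (t * s) * s * rho (d + 2) t = s * S (d + 2) f'' s := by
    rw [S, ← intervalIntegral.integral_const_mul]; congr 1; ext t; ring
  rw [hlhs, hrhs] at hibp
  field_simp
  linarith

theorem S_deriv_of_C2 (d : ℕ) (hd : 3 ≤ d) (f f' f'' : ℝ → ℝ)
    (hf : ∀ t ∈ Set.Icc (0:ℝ) 1, HasDerivWithinAt f (f' t) (Set.Icc (0:ℝ) 1) t)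
    (hf' : ∀ t ∈ Set.Icc (0:ℝ) 1, HasDerivWithinAt f' (f'' t) (Set.Icc (0:ℝ) 1) t)
    (hf'' : ContinuousOn f'' (Set.Icc (0:ℝ) 1)) :
    ∃ G : ℝ → ℝ,
      (∀ s ∈ Set.Icc (0:ℝ) 1, HasDerivWithinAt (S d f) (G s) (Set.Icc (0:ℝ) 1) s) ∧
      (∀ C : ℝ, (∀ t ∈ Set.Icc (0:ℝ) 1, |f' t| ≤ C) →
        ∀ s ∈ Set.Icc (0:ℝ) 1, |G s| ≤ c (d + 2) / d * C) ∧
      (f' 0 = 0 → ∀ s ∈ Set.Icc (0:ℝ) 1, G s = s / d * S (d + 2) f'' s) := by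
  have hrho := continuous_rho hd
  refine ⟨fun s => ∫ t in (0:ℝ)..1, t * f' (t * s) * rho d t, fun s hs => ?_,
    fun C hC s hs => ?_, fun h0 s hs => integral_mul_comp_mul_rho hd hf' hf'' h0 hs⟩
  · exact hasDerivWithinAt_integral_comp_mul hf (fun t ht => (hf' t ht).continuousWithinAt)
      (hrho.intervalIntegrable 0 1) hs
  · calc |∫ t in (0:ℝ)..1, t * f' (t * s) * rho d t| ≤ C * ∫ t in (0:ℝ)..1, t * rho d t :=
          abs_integral_mul_comp_mul_le
            (fun t ht => rho_nonneg (by omega) (abs_le.2 ⟨by linarith [ht.1], ht.2⟩))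
            ((continuous_id.mul hrho).intervalIntegrable 0 1) hC hs
      _ = c (d + 2) / d * C := by rw [integral_mul_rho hd, mul_comm]
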